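/- arXiv:2407.00780 — 2 statements merged into one kernel-verified Lean document; each statement's English description precedes it below -/
import Mathlib

section
/- Let S(x,λ) = ½(λ + k·g(x))² be the storage function along a trajectory (x(t), λ(t)) of the controlled PDGD system ẋ = -∇f(x) - Dg(x)ᵀλ, λ̇ = -k·Dg(x)·ẋ - (α/2)(λ + k·g(x)). Then Ṡ = -α·S along trajectories, and hence |λ(t) + k·g(x(t))| = |λ(0) + k·g(x(0))|·e^{-αt/2}, so the trajectories converge exponentially to the manifold λ + k·g(x) = 0. -/
/-! The control law makes the constraint residual `y = λ + k·g(x)` obey the scalar linear ODE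
`ẏ = λ̇ + k⟪∇g(x), ẋ⟫ = -(α/2)·y`. Hence `y(t) = y(0)·e^{-αt/2}`,
and the storage function `½y²` decays at rate `α`. -/

open Real

theorem HasGradientAt.hasDerivAt_comp {E : Type*} [NormedAddCommGroup E] [InnerProductSpace ℝ E]
    [CompleteSpace E] {g : E → ℝ} {g' : E} {γ : ℝ → E} {γ' : E} {t : ℝ}
    (hg : HasGradientAt g g' (γ t)) (hγ : HasDerivAt γ γ' t) :
    HasDerivAt (fun s => g (γ s)) (inner ℝ g' γ') t :=
  hg.hasFDerivAt.comp_hasDerivAt t hγ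

theorem eq_mul_exp_of_hasDerivAt_mul {y : ℝ → ℝ} {c : ℝ} (hy : ∀ t, HasDerivAt y (c * y t) t)
    (t : ℝ) : y t = y 0 * exp (c * t) := by
  have hdecay : ∀ s, HasDerivAt (fun s => exp (-(c * s))) (-c * exp (-(c * s))) s := fun s => by
    simpa [mul_comm] using ((hasDerivAt_id s).const_mul c).neg.exp
  have hconst : ∀ s, HasDerivAt (fun s => y s * exp (-(c * s))) 0 s := fun s => by
    refine ((hy s).mul (hdecay s)).congr_deriv ?_
    ring
  have h := is_const_of_deriv_eq_zero (fun s => (hconst s).differentiableAt)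
    (fun s => (hconst s).deriv) t 0
  simp only [mul_zero, neg_zero, exp_zero, mul_one] at h
  rw [← h, mul_assoc, ← exp_add, neg_add_cancel, exp_zero, mul_one]

theorem HasDerivAt.half_sq_of_hasDerivAt_mul {y : ℝ → ℝ} {c t : ℝ} (hy : HasDerivAt y (c * y t) t) :
    HasDerivAt (fun s => (1 / 2) * y s ^ 2) (2 * c * ((1 / 2) * y t ^ 2)) t := by
  refine ((hy.fun_pow 2).const_mul (1 / 2 : ℝ)).congr_deriv ?_
  ring

theorem hasDerivAt_multiplier_add_mul_constraint {E : Type*} [NormedAddCommGroup E]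
    [InnerProductSpace ℝ E] [CompleteSpace E] {g : E → ℝ} {x : ℝ → E} {lam : ℝ → ℝ} {k α : ℝ}
    (hg : Differentiable ℝ g) (hx : Differentiable ℝ x) (hlam : Differentiable ℝ lam)
    (hlamdyn : ∀ t : ℝ, deriv lam t =
      -k * (inner ℝ (gradient g (x t)) (deriv x t) : ℝ) - (α / 2) * (lam t + k * g (x t)))
    (t : ℝ) :
    HasDerivAt (fun s => lam s + k * g (x s)) (-(α / 2) * (lam t + k * g (x t))) t := by
  have hgx := (hg (x t)).hasGradientAt.hasDerivAt_comp (hx t).hasDerivAt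
  refine ((hlam t).hasDerivAt.add (hgx.const_mul k)).congr_deriv ?_
  rw [hlamdyn t]
  ring

theorem stmt_4_general (n : ℕ) (g : EuclideanSpace ℝ (Fin n) → ℝ)
    (hg : ContDiff ℝ 1 g)
    (k α : ℝ)
    (x : ℝ → EuclideanSpace ℝ (Fin n)) (lam : ℝ → ℝ)
    (hx : Differentiable ℝ x) (hlam : Differentiable ℝ lam)
    (hlamdyn : ∀ t : ℝ, deriv lam t =
      -k * (inner ℝ (gradient g (x t)) (deriv x t) : ℝ)
        - (α / 2) * (lam t + k * g (x t))) :
    (∀ t : ℝ, deriv (fun s => (1 / 2) * (lam s + k * g (x s)) ^ 2) t =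
        -α * ((1 / 2) * (lam t + k * g (x t)) ^ 2)) ∧
    (∀ t : ℝ, 0 ≤ t → |lam t + k * g (x t)| =
        |lam 0 + k * g (x 0)| * Real.exp (-(α * t) / 2)) := by
  have hy := hasDerivAt_multiplier_add_mul_constraint (hg.differentiable one_ne_zero) hx hlam
    hlamdyn
  refine ⟨fun t => ?_, fun t _ => ?_⟩
  · rw [(hy t).half_sq_of_hasDerivAt_mul.deriv]
    ring
  · rw [eq_mul_exp_of_hasDerivAt_mul hy t, abs_mul, abs_of_pos (exp_pos _)]
    ring_nf

/-- Along trajectories of the controlled PDGD system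
ẋ = -∇f(x) - λ∇g(x), λ̇ = -k·⟨∇g(x), ẋ⟩ - (α/2)(λ + k·g(x)),
the storage function S = ½(λ + k·g(x))² satisfies Ṡ = -α·S, and hence
|λ(t) + k·g(x(t))| = |λ(0) + k·g(x(0))|·e^{-αt/2} for t ≥ 0. -/
theorem stmt_4 (n : ℕ) (f g : EuclideanSpace ℝ (Fin n) → ℝ)
    (hf : ContDiff ℝ 1 f) (hg : ContDiff ℝ 1 g)
    (k α : ℝ) (hk : 0 < k) (hα : 0 < α)
    (x : ℝ → EuclideanSpace ℝ (Fin n)) (lam : ℝ → ℝ)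
    (hx : Differentiable ℝ x) (hlam : Differentiable ℝ lam)
    (hxdyn : ∀ t : ℝ, deriv x t = -gradient f (x t) - lam t • gradient g (x t))
    (hlamdyn : ∀ t : ℝ, deriv lam t =
      -k * (inner ℝ (gradient g (x t)) (deriv x t) : ℝ)
        - (α / 2) * (lam t + k * g (x t))) :
    (∀ t : ℝ, deriv (fun s => (1 / 2) * (lam s + k * g (x s)) ^ 2) t =
        -α * ((1 / 2) * (lam t + k * g (x t)) ^ 2)) ∧
    (∀ t : ℝ, 0 ≤ t → |lam t + k * g (x t)| =
        |lam 0 + k * g (x 0)| * Real.exp (-(α * t) / 2)) :=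
  stmt_4_general n g hg k α x lam hx hlam hlamdyn
end

section
/- Let f : ℝⁿ → ℝ be C² with ∇²f(x) ⪰ μI for all x (μ > 0), let A be an m×n real matrix with largest eigenvalue of AᵀA equal to q₂, and let 0 < k < μ/q₂. Then, along solutions of the target dynamics ẋ = -∇f(x) + k·Aᵀ(Ax - b), the Krasovskii function V(x) = ½ ẋᵀẋ satisfies V̇ ≤ -2γ·V with γ = μ - k·q₂ > 0; hence ‖ẋ(t)‖ decays exponentially. -/
open Matrix Real

/-!
Along a solution of `ẋ = F x` the velocity `u = ẋ = F ∘ x` satisfies `u̇ = DF(x) u`, so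
`d/dt ½‖u‖² = ⟪DF(x) u, u⟫`. For the target field `DF(x) = -∇²f(x) + k AᵀA`, so the bounds
`∇²f ⪰ μ` and `AᵀA ⪯ q₂` make this at most `-(μ - k q₂)‖u‖²`; Grönwall's inequality for `‖u‖²`
then gives the exponential decay.
-/

theorem Matrix.IsHermitian.inner_toEuclideanLin_self_le {ι : Type*} [Fintype ι] [DecidableEq ι]
    {B : Matrix ι ι ℝ} (hB : B.IsHermitian) {q : ℝ} (hq : ∀ i, hB.eigenvalues i ≤ q)
    (v : EuclideanSpace ℝ ι) :
    inner ℝ (toEuclideanLin B v) v ≤ q * ‖v‖ ^ 2 := by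
  set e := hB.eigenvectorBasis
  have hsymm := isSymmetric_toEuclideanLin_iff.mpr hB
  have he : ∀ i, toEuclideanLin B (e i) = hB.eigenvalues i • e i := fun i => by
    ext j
    simpa [ofLp_toLpLin] using congrFun (hB.mulVec_eigenvectorBasis i) j
  calc inner ℝ (toEuclideanLin B v) v
      = ∑ i, hB.eigenvalues i * inner ℝ (e i) v ^ 2 := by
        rw [← e.sum_inner_mul_inner]
        refine Finset.sum_congr rfl fun i _ => ?_
        rw [hsymm, he, real_inner_smul_right, real_inner_comm v]
        ring
    _ ≤ ∑ i, q * inner ℝ (e i) v ^ 2 := by gcongr with i; exact hq i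
    _ = q * ‖v‖ ^ 2 := by
        rw [← Finset.mul_sum, ← e.sum_sq_norm_inner_right]
        simp only [Real.norm_eq_abs, sq_abs]

theorem ContDiff.differentiable_gradient {E : Type*} [NormedAddCommGroup E] [InnerProductSpace ℝ E]
    [CompleteSpace E] {f : E → ℝ} (hf : ContDiff ℝ 2 f) : Differentiable ℝ (gradient f) :=
  (InnerProductSpace.toDual ℝ E).symm.differentiable.comp
    ((hf.fderiv_right (m := 1) (by norm_num)).differentiable one_ne_zero)

theorem le_mul_exp_of_hasDerivAt_le_mul {φ φ' : ℝ → ℝ} {c t : ℝ}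
    (hφ : ∀ s, HasDerivAt φ (φ' s) s) (hbound : ∀ s, φ' s ≤ c * φ s) (ht : 0 ≤ t) :
    φ t ≤ φ 0 * exp (c * t) := by
  have := le_gronwallBound_of_liminf_deriv_right_le (f' := φ') (ε := 0) (b := t)
    (fun s _ => (hφ s).continuousAt.continuousWithinAt)
    (fun s _ _ hr => (hφ s).hasDerivWithinAt.liminf_right_slope_le hr) le_rfl
    (fun s _ => by simpa using hbound s) t ⟨ht, le_rfl⟩
  rwa [gronwallBound_ε0, sub_zero] at this

section Krasovskii

variable {E : Type*} [NormedAddCommGroup E] [InnerProductSpace ℝ E]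
  {F : E → E} {F' : E → E →L[ℝ] E} {γ : ℝ} {x : ℝ → E}

theorem hasDerivAt_half_norm_sq_comp_solution (hF : ∀ y, HasFDerivAt F (F' y) y)
    (hx : ∀ t, HasDerivAt x (F (x t)) t) (t : ℝ) :
    HasDerivAt (fun s => 1 / 2 * ‖F (x s)‖ ^ 2) (inner ℝ (F' (x t) (F (x t))) (F (x t))) t := by
  refine (((hF (x t)).comp_hasDerivAt t (hx t)).norm_sq.const_mul (1 / 2 : ℝ)).congr_deriv ?_
  rw [Function.comp_apply, real_inner_comm]
  ring

variable (hF : ∀ y, HasFDerivAt F (F' y) y) (hcontr : ∀ y v, inner ℝ (F' y v) v ≤ -γ * ‖v‖ ^ 2)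
  (hx : ∀ t, HasDerivAt x (F (x t)) t)
include hF hcontr hx

theorem deriv_half_norm_sq_comp_solution_le (t : ℝ) :
    deriv (fun s => 1 / 2 * ‖F (x s)‖ ^ 2) t ≤ -2 * γ * (1 / 2 * ‖F (x t)‖ ^ 2) := by
  rw [(hasDerivAt_half_norm_sq_comp_solution hF hx t).deriv]
  linarith [hcontr (x t) (F (x t))]

theorem norm_comp_solution_le_exp {t : ℝ} (ht : 0 ≤ t) :
    ‖F (x t)‖ ≤ ‖F (x 0)‖ * exp (-γ * t) := by
  have hV := le_mul_exp_of_hasDerivAt_le_mul (c := -2 * γ)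
    (hasDerivAt_half_norm_sq_comp_solution hF hx)
    (fun s => by linarith [hcontr (x s) (F (x s))]) ht
  refine (pow_le_pow_iff_left₀ (norm_nonneg _) (by positivity) two_ne_zero).mp ?_
  calc ‖F (x t)‖ ^ 2 ≤ ‖F (x 0)‖ ^ 2 * exp (-2 * γ * t) := by linarith
    _ = (‖F (x 0)‖ * exp (-γ * t)) ^ 2 := by rw [mul_pow, ← exp_nat_mul]; ring_nf

end Krasovskii

section TargetDynamics

variable {ι κ : Type*} [Fintype ι] [DecidableEq ι] [Fintype κ] [DecidableEq κ]
  (A : Matrix κ ι ℝ) (b : EuclideanSpace ℝ κ) (k : ℝ)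

theorem hasFDerivAt_neg_gradient_add_smul_transpose_affine {f : EuclideanSpace ℝ ι → ℝ}
    (hf : Differentiable ℝ (gradient f)) (y : EuclideanSpace ℝ ι) :
    HasFDerivAt (fun y => -gradient f y + k • toEuclideanLin Aᵀ (toEuclideanLin A y - b))
      (-fderiv ℝ (gradient f) y + k • (toEuclideanLin Aᵀ).toContinuousLinearMap.comp
        (toEuclideanLin A).toContinuousLinearMap) y :=
  (hf y).hasFDerivAt.neg.add
    ((((toEuclideanLin Aᵀ).toContinuousLinearMap.hasFDerivAt).comp y
      ((toEuclideanLin A).toContinuousLinearMap.hasFDerivAt.sub_const b)).const_smul k)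

theorem inner_neg_add_smul_transpose_mul_le {H : EuclideanSpace ℝ ι →L[ℝ] EuclideanSpace ℝ ι}
    {μ q : ℝ} (hH : ∀ v, μ * ‖v‖ ^ 2 ≤ inner ℝ (H v) v)
    (hq : ∀ i, (isHermitian_conjTranspose_mul_self A).eigenvalues i ≤ q) (hk : 0 ≤ k)
    (v : EuclideanSpace ℝ ι) :
    inner ℝ ((-H + k • (toEuclideanLin Aᵀ).toContinuousLinearMap.comp
        (toEuclideanLin A).toContinuousLinearMap) v) v ≤ -(μ - k * q) * ‖v‖ ^ 2 := by
  have hAA : toEuclideanLin Aᵀ (toEuclideanLin A v) = toEuclideanLin (Aᴴ * A) v := by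
    rw [conjTranspose_eq_transpose_of_trivial, toLpLin_mul_same]; rfl
  have hq' := (isHermitian_conjTranspose_mul_self A).inner_toEuclideanLin_self_le hq v
  simp only [_root_.add_apply, _root_.neg_apply, _root_.smul_apply, ContinuousLinearMap.comp_apply,
    LinearMap.coe_toContinuousLinearMap', inner_add_left, inner_neg_left,
    real_inner_smul_left, hAA]
  nlinarith [hH v, mul_le_mul_of_nonneg_left hq' hk]

end TargetDynamics

theorem stmt_5_general (n m : ℕ) (f : EuclideanSpace ℝ (Fin n) → ℝ) (μ : ℝ)
    (hf : ContDiff ℝ 2 f)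
    (hHess : ∀ x v : EuclideanSpace ℝ (Fin n),
      μ * ‖v‖ ^ 2 ≤ inner ℝ (fderiv ℝ (fun y => gradient f y) x v) v)
    (A : Matrix (Fin m) (Fin n) ℝ) (b : EuclideanSpace ℝ (Fin m)) (q₂ k : ℝ)
    (hq₂ : IsGreatest (Set.range (Matrix.isHermitian_conjTranspose_mul_self A).eigenvalues) q₂)
    (hk : 0 < k)
    (x : ℝ → EuclideanSpace ℝ (Fin n)) (hx : ContDiff ℝ 2 x)
    (hdyn : ∀ t : ℝ, deriv x t =
      -gradient f (x t) + k • (Matrix.toEuclideanLin Aᵀ) ((Matrix.toEuclideanLin A) (x t) - b)) :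
    (∀ t : ℝ, deriv (fun s => (1 / 2) * ‖deriv x s‖ ^ 2) t ≤
        -2 * (μ - k * q₂) * ((1 / 2) * ‖deriv x t‖ ^ 2)) ∧
    (∀ t : ℝ, 0 ≤ t → ‖deriv x t‖ ≤ ‖deriv x 0‖ * Real.exp (-(μ - k * q₂) * t)) := by
  set F := fun y => -gradient f y + k • toEuclideanLin Aᵀ (toEuclideanLin A y - b)
  have hF := hasFDerivAt_neg_gradient_add_smul_transpose_affine A b k hf.differentiable_gradient
  have hcontr (y v) := inner_neg_add_smul_transpose_mul_le A k (hHess y)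
    (fun i => hq₂.2 ⟨i, rfl⟩) hk.le v
  have hsol (t) : HasDerivAt x (F (x t)) t := by
    simpa only [hdyn] using (hx.differentiable two_ne_zero t).hasDerivAt
  rw [show deriv x = fun t => F (x t) from funext hdyn]
  exact ⟨deriv_half_norm_sq_comp_solution_le hF hcontr hsol,
    fun t => norm_comp_solution_le_exp hF hcontr hsol⟩

/-- For f C² with ∇²f ⪰ μI (μ > 0), A an m×n matrix with q₂ the largest
eigenvalue of AᵀA, and 0 < k with k·q₂ < μ, along solutions of the target dynamics
ẋ = -∇f(x) + k·Aᵀ(Ax - b) the Krasovskii function V = ½ẋᵀẋ satisfies V̇ ≤ -2γV with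
γ = μ - k·q₂ > 0; hence ‖ẋ(t)‖ decays exponentially. -/
theorem stmt_5 (n m : ℕ) (f : EuclideanSpace ℝ (Fin n) → ℝ) (μ : ℝ)
    (hf : ContDiff ℝ 2 f) (hμ : 0 < μ)
    (hHess : ∀ x v : EuclideanSpace ℝ (Fin n),
      μ * ‖v‖ ^ 2 ≤ inner ℝ (fderiv ℝ (fun y => gradient f y) x v) v)
    (A : Matrix (Fin m) (Fin n) ℝ) (b : EuclideanSpace ℝ (Fin m)) (q₂ k : ℝ)
    (hq₂ : IsGreatest (Set.range (Matrix.isHermitian_conjTranspose_mul_self A).eigenvalues) q₂)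
    (hk : 0 < k) (hkμ : k * q₂ < μ)
    (x : ℝ → EuclideanSpace ℝ (Fin n)) (hx : ContDiff ℝ 2 x)
    (hdyn : ∀ t : ℝ, deriv x t =
      -gradient f (x t) + k • (Matrix.toEuclideanLin Aᵀ) ((Matrix.toEuclideanLin A) (x t) - b)) :
    (∀ t : ℝ, deriv (fun s => (1 / 2) * ‖deriv x s‖ ^ 2) t ≤
        -2 * (μ - k * q₂) * ((1 / 2) * ‖deriv x t‖ ^ 2)) ∧
    (∀ t : ℝ, 0 ≤ t → ‖deriv x t‖ ≤ ‖deriv x 0‖ * Real.exp (-(μ - k * q₂) * t)) :=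
  stmt_5_general n m f μ hf hHess A b q₂ k hq₂ hk x hx hdyn
end
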